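/- Let ε_4 = (1/6)∏_{j=1}^m X_j(X_j−1)(X_j−2)(X_j−3) − (2/3)(∏_{j=1}^m X_j)(∏_{j=1}^m X_j(X_j−1)(X_j−2)) − (1/2)(∏_{j=1}^m X_j(X_j−1))² + 2(∏_{j=1}^m X_j)²(∏_{j=1}^m X_j(X_j−1)) − (∏_{j=1}^m X_j)⁴. Then E[ε_4] = (1/6)p_1⁴ − (2/3)p_1³∏_{j=1}^m(3+μ_j) − (1/2)p_1²∏_{j=1}^m(2+4μ_j+μ_j²) + 2p_1²∏_{j=1}^m(4+5μ_j+μ_j²) − p_1∏_{j=1}^m(1+7μ_j+6μ_j²+μ_j³). -/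

import Mathlib

/-!
Each of the five terms of `ε₄` is a constant times a product `∏ j, g (X j)` of one polynomial `g`
evaluated at the coordinates, so by independence its expectation is `∏ j, E[g (X j)]`. Writing `g`
in the falling-factorial basis `n ↦ n (n - 1) ⋯ (n - k + 1)` makes the one-dimensional expectations
immediate, because the `k`-th factorial moment of `Poisson(r)` is `r ^ k`.
-/

open MeasureTheory ProbabilityTheory Finset
open scoped NNReal

/-- The law of `m` independent Poisson random variables `X_j ~ Poisson (μ j)`,
as a product measure on `Fin m → ℕ`. -/
noncomputable def poissonPi {m : ℕ} (μ : Fin m → ℝ≥0) : Measure (Fin m → ℕ) :=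
  Measure.pi fun j => poissonMeasure (μ j)

open Real
open scoped Nat

namespace ProbabilityTheory

variable (r : ℝ≥0) (k : ℕ)

lemma hasSum_mul_descFactorial_poissonMeasure :
    HasSum (fun n ↦ exp (-r) * r ^ n / n ! * (n.descFactorial k : ℝ)) (r ^ k) := by
  have hvanish : ∀ n ∉ Set.range (· + k),
      exp (-r) * r ^ n / n ! * (n.descFactorial k : ℝ) = 0 := by
    intro n hn
    have hnk : n < k := by
      by_contra! h
      exact hn ⟨n - k, Nat.sub_add_cancel h⟩
    simp [Nat.descFactorial_of_lt hnk]
  rw [← (add_left_injective k).hasSum_iff hvanish]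
  have hshift : (fun j ↦ exp (-r) * r ^ (j + k) / (j + k)! * ((j + k).descFactorial k : ℝ))
      = fun j ↦ r ^ k * (exp (-r) * r ^ j / j !) := by
    funext j
    have hfac := Nat.factorial_mul_descFactorial (Nat.le_add_left k j)
    rw [Nat.add_sub_cancel] at hfac
    have hfac' : ((j + k)! : ℝ) = j ! * (j + k).descFactorial k := by exact_mod_cast hfac.symm
    have hdesc : ((j + k).descFactorial k : ℝ) ≠ 0 := by
      exact_mod_cast (Nat.descFactorial_pos.mpr (Nat.le_add_left k j)).ne'
    rw [hfac', pow_add]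
    field_simp
  simpa [Function.comp_def, hshift] using (hasSum_one_poissonMeasure r).mul_left ((r : ℝ) ^ k)

lemma integrable_descFactorial_poissonMeasure :
    Integrable (fun n : ℕ ↦ (n.descFactorial k : ℝ)) (poissonMeasure r) := by
  rw [integrable_poissonMeasure_iff]
  simpa using (hasSum_mul_descFactorial_poissonMeasure r k).summable

lemma integral_descFactorial_poissonMeasure :
    ∫ n, (n.descFactorial k : ℝ) ∂poissonMeasure r = r ^ k := by
  rw [integral_poissonMeasure]
  exact (hasSum_mul_descFactorial_poissonMeasure r k).tsum_eq

end ProbabilityTheory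

section descFactorialComb

def descFactorialComb {K : ℕ} (c : Fin K → ℝ) (n : ℕ) : ℝ := ∑ k, c k * n.descFactorial k

lemma descFactorialComb_five (c : Fin 5 → ℝ) (n : ℕ) : descFactorialComb c n =
    c 0 + c 1 * n + c 2 * (n * (n - 1)) + c 3 * (n * (n - 1) * (n - 2))
      + c 4 * (n * (n - 1) * (n - 2) * (n - 3)) := by
  simp [descFactorialComb, Fin.sum_univ_five, ← descPochhammer_eval_eq_descFactorial ℝ,
    descPochhammer_succ_eval]

variable {K : ℕ} (c : Fin K → ℝ)

lemma integrable_descFactorialComb_poissonMeasure (r : ℝ≥0) :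
    Integrable (descFactorialComb c) (poissonMeasure r) :=
  integrable_finsetSum _ fun k _ ↦ (integrable_descFactorial_poissonMeasure r k).const_mul (c k)

lemma integral_descFactorialComb_poissonMeasure (r : ℝ≥0) :
    ∫ n, descFactorialComb c n ∂poissonMeasure r = ∑ k, c k * (r : ℝ) ^ (k : ℕ) := by
  simp only [descFactorialComb]
  rw [integral_finsetSum _ fun (k : Fin K) _ ↦
    (integrable_descFactorial_poissonMeasure r k).const_mul (c k)]
  simp only [integral_const_mul, integral_descFactorial_poissonMeasure]

variable {m : ℕ} (μ : Fin m → ℝ≥0)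

lemma integrable_prod_descFactorialComb_poissonPi :
    Integrable (fun x ↦ ∏ j, descFactorialComb c (x j)) (poissonPi μ) :=
  Integrable.fintype_prod fun j ↦ integrable_descFactorialComb_poissonMeasure c (μ j)

lemma integral_prod_descFactorialComb_poissonPi :
    ∫ x, ∏ j, descFactorialComb c (x j) ∂poissonPi μ = ∏ j, ∑ k, c k * (μ j : ℝ) ^ (k : ℕ) := by
  simp only [poissonPi, integral_fintype_prod_eq_prod, integral_descFactorialComb_poissonMeasure]

end descFactorialComb

theorem expectation_eps4_general (m : ℕ) (μ : Fin m → ℝ≥0) :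
    ∫ x : Fin m → ℕ, ((1/6 : ℝ) * ∏ j, ((x j : ℝ) * ((x j : ℝ) - 1) * ((x j : ℝ) - 2) * ((x j : ℝ) - 3)) - (2/3 : ℝ) * (∏ j, (x j : ℝ)) * (∏ j, ((x j : ℝ) * ((x j : ℝ) - 1) * ((x j : ℝ) - 2))) - (1/2 : ℝ) * (∏ j, ((x j : ℝ) * ((x j : ℝ) - 1))) ^ 2 + 2 * (∏ j, (x j : ℝ)) ^ 2 * (∏ j, ((x j : ℝ) * ((x j : ℝ) - 1))) - (∏ j, (x j : ℝ)) ^ 4) ∂(poissonPi μ)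
      = (1/6 : ℝ) * (∏ j, (μ j : ℝ)) ^ 4 - (2/3 : ℝ) * (∏ j, (μ j : ℝ)) ^ 3 * ∏ j, (3 + (μ j : ℝ)) - (1/2 : ℝ) * (∏ j, (μ j : ℝ)) ^ 2 * ∏ j, (2 + 4 * (μ j : ℝ) + (μ j : ℝ) ^ 2) + 2 * (∏ j, (μ j : ℝ)) ^ 2 * ∏ j, (4 + 5 * (μ j : ℝ) + (μ j : ℝ) ^ 2) - (∏ j, (μ j : ℝ)) * ∏ j, (1 + 7 * (μ j : ℝ) + 6 * (μ j : ℝ) ^ 2 + (μ j : ℝ) ^ 3) := by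
  have hint (c : Fin 5 → ℝ) := integrable_prod_descFactorialComb_poissonPi c μ
  calc _ = ∫ x, (1/6 : ℝ) * ∏ j, descFactorialComb ![0, 0, 0, 0, 1] (x j)
          - 2/3 * ∏ j, descFactorialComb ![0, 0, 0, 3, 1] (x j)
          - 1/2 * ∏ j, descFactorialComb ![0, 0, 2, 4, 1] (x j)
          + 2 * ∏ j, descFactorialComb ![0, 0, 4, 5, 1] (x j)
          - ∏ j, descFactorialComb ![0, 1, 7, 6, 1] (x j) ∂poissonPi μ := by
        congr 1; funext x
        simp only [mul_assoc, ← prod_pow, ← prod_mul_distrib, descFactorialComb_five,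
          Matrix.cons_val]
        ring_nf
    _ = (1/6 : ℝ) * ∏ j, ∑ k, ![0, 0, 0, 0, 1] k * (μ j : ℝ) ^ (k : ℕ)
          - 2/3 * ∏ j, ∑ k, ![0, 0, 0, 3, 1] k * (μ j : ℝ) ^ (k : ℕ)
          - 1/2 * ∏ j, ∑ k, ![0, 0, 2, 4, 1] k * (μ j : ℝ) ^ (k : ℕ)
          + 2 * ∏ j, ∑ k, ![0, 0, 4, 5, 1] k * (μ j : ℝ) ^ (k : ℕ)
          - ∏ j, ∑ k, ![0, 1, 7, 6, 1] k * (μ j : ℝ) ^ (k : ℕ) := by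
        rw [integral_sub (by fun_prop) (by fun_prop), integral_add (by fun_prop) (by fun_prop),
          integral_sub (by fun_prop) (by fun_prop), integral_sub (by fun_prop) (by fun_prop)]
        simp only [integral_const_mul, integral_prod_descFactorialComb_poissonPi]
    _ = _ := by
        simp only [mul_assoc, ← prod_pow, ← prod_mul_distrib, Fin.sum_univ_five, Matrix.cons_val,
          Fin.coe_ofNat_eq_mod]
        ring_nf

theorem expectation_eps4 (m : ℕ) (hm : 2 ≤ m) (μ : Fin m → ℝ≥0) (hμ : ∀ j, 0 < μ j) :
    ∫ x : Fin m → ℕ, ((1/6 : ℝ) * ∏ j, ((x j : ℝ) * ((x j : ℝ) - 1) * ((x j : ℝ) - 2) * ((x j : ℝ) - 3)) - (2/3 : ℝ) * (∏ j, (x j : ℝ)) * (∏ j, ((x j : ℝ) * ((x j : ℝ) - 1) * ((x j : ℝ) - 2))) - (1/2 : ℝ) * (∏ j, ((x j : ℝ) * ((x j : ℝ) - 1))) ^ 2 + 2 * (∏ j, (x j : ℝ)) ^ 2 * (∏ j, ((x j : ℝ) * ((x j : ℝ) - 1))) - (∏ j, (x j : ℝ)) ^ 4) ∂(poissonPi 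μ)
      = (1/6 : ℝ) * (∏ j, (μ j : ℝ)) ^ 4 - (2/3 : ℝ) * (∏ j, (μ j : ℝ)) ^ 3 * ∏ j, (3 + (μ j : ℝ)) - (1/2 : ℝ) * (∏ j, (μ j : ℝ)) ^ 2 * ∏ j, (2 + 4 * (μ j : ℝ) + (μ j : ℝ) ^ 2) + 2 * (∏ j, (μ j : ℝ)) ^ 2 * ∏ j, (4 + 5 * (μ j : ℝ) + (μ j : ℝ) ^ 2) - (∏ j, (μ j : ℝ)) * ∏ j, (1 + 7 * (μ j : ℝ) + 6 * (μ j : ℝ) ^ 2 + (μ j : ℝ) ^ 3) :=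
  expectation_eps4_general m μ
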